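/- arXiv:2001.10137 — 3 statements merged into one kernel-verified Lean document; each statement's English description precedes it below -/
import Mathlib

section
/- For all integers 0 ≤ l ≤ k ≤ p with k ≤ p, the ratio of binomial coefficients satisfies C(p-k, l) / C(p, k) ≤ (k/(p-k+1))^(k-l). -/
lemma binom_ratio_le_nat (p l : ℕ) : ∀ k, l ≤ k → k ≤ p →
    (p - k).choose l * (p - k + 1) ^ (k - l) ≤ p.choose k * k ^ (k - l) := by
  intro k
  induction k with
  | zero =>
      intro hl hp
      interval_cases l
      simp
  | succ k ih =>
      intro hl hp
      rcases eq_or_lt_of_le hl with h | h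
      · subst h
        simpa using Nat.choose_le_choose (k+1) (Nat.sub_le p (k+1))
      · have hlk : l ≤ k := Nat.lt_succ_iff.mp h
        have hkp : k ≤ p := le_of_lt (Nat.lt_of_lt_of_le (Nat.lt_succ_self k) hp)
        have ihh := ih hlk hkp
        have he : k + 1 - l = (k - l) + 1 := by omega
        have hsub : p - k = (p - (k + 1)) + 1 := by omega
        have key : p.choose (k + 1) * (k + 1) = p.choose k * (p - k) :=
          Nat.choose_succ_right_eq p k
        calc (p - (k+1)).choose l * (p - (k+1) + 1) ^ (k + 1 - l)
            = ((p - (k+1)).choose l * (p - k) ^ (k - l)) * (p - k) := by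
              rw [he, ← hsub]; ring
          _ ≤ ((p - k).choose l * (p - k + 1) ^ (k - l)) * (p - k) := by
              apply Nat.mul_le_mul_right
              exact Nat.mul_le_mul (Nat.choose_le_choose l (by omega))
                (Nat.pow_le_pow_left (Nat.le_succ _) _)
          _ ≤ (p.choose k * k ^ (k - l)) * (p - k) := Nat.mul_le_mul_right _ ihh
          _ = (p.choose (k+1) * (k+1)) * k ^ (k - l) := by rw [key]; ring
          _ ≤ p.choose (k+1) * (k+1) ^ (k + 1 - l) := by
              rw [he, pow_succ]
              calc p.choose (k+1) * (k+1) * k ^ (k - l)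
                  ≤ p.choose (k+1) * (k+1) * (k+1) ^ (k - l) :=
                    Nat.mul_le_mul_left _ (Nat.pow_le_pow_left (Nat.le_succ _) _)
                _ = p.choose (k+1) * ((k+1) ^ (k - l) * (k+1)) := by ring

/-- For all naturals `l ≤ k ≤ p`, the ratio of binomial coefficients satisfies
`C(p-k, l) / C(p, k) ≤ (k/(p-k+1))^(k-l)` over the reals. -/
theorem binom_ratio_le (p k l : ℕ) (hlk : l ≤ k) (hkp : k ≤ p) :
    (((p - k).choose l : ℝ)) / (p.choose k : ℝ)
      ≤ ((k : ℝ) / ((p : ℝ) - k + 1)) ^ (k - l) := by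
  have hcast : (p : ℝ) - k = ((p - k : ℕ) : ℝ) := by
    push_cast [Nat.cast_sub hkp]; ring
  have hb : (0 : ℝ) < (p.choose k : ℝ) := by
    exact_mod_cast Nat.choose_pos hkp
  have hc : (0 : ℝ) < ((p : ℝ) - k + 1) ^ (k - l) := by
    apply pow_pos; rw [hcast]; positivity
  rw [div_pow, div_le_div_iff₀ hb hc]
  have hnat := binom_ratio_le_nat p l k hlk hkp
  have : ((p - k).choose l : ℝ) * ((p - k + 1 : ℕ) : ℝ) ^ (k - l)
      ≤ (p.choose k : ℝ) * ((k : ℕ) : ℝ) ^ (k - l) := by exact_mod_cast hnat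
  rw [hcast]
  push_cast at this ⊢
  linarith
end

section
/- Suppose n ≤ (1-η)·log₂ C(p,k) for some η ∈ (0,1). Then the quantity χ² := C(p,k)^{-1} · Σ_{ℓ=0}^{k} C(k,ℓ)·C(p-k,ℓ)·2^{n(1 - ℓ/k)} - 1 satisfies χ² ≤ exp( e^{1-η} · k · (k/p)^η · p/(p-k+1) ) - 1. -/
open Finset Real

private lemma descF_key (p k m : ℕ) (hm : m ≤ k) (hkp : 2 * k ≤ p) :
    k.descFactorial m * ((p - k).descFactorial (k - m) * (p - k + 1) ^ m)
      ≤ k ^ m * p.descFactorial k := by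
  have hkp' : k ≤ p := by omega
  have h1 : k.descFactorial m ≤ k ^ m := Nat.descFactorial_le_pow k m
  have split : p.descFactorial k
      = (∏ i ∈ range m, (p - i)) * ∏ j ∈ range (k - m), (p - (m + j)) := by
    conv_lhs => rw [Nat.descFactorial_eq_prod_range, show k = m + (k - m) from by omega,
      Finset.prod_range_add]
  have h2 : (p - k).descFactorial (k - m) ≤ ∏ j ∈ range (k - m), (p - (m + j)) := by
    rw [Nat.descFactorial_eq_prod_range]
    apply Finset.prod_le_prod'
    intro j hj
    simp only [mem_range] at hj
    omega
  have h3 : (p - k + 1) ^ m ≤ ∏ i ∈ range m, (p - i) := by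
    calc (p - k + 1) ^ m = ∏ _i ∈ range m, (p - k + 1) := by
          rw [Finset.prod_const, card_range]
      _ ≤ ∏ i ∈ range m, (p - i) := by
          apply Finset.prod_le_prod'
          intro i hi
          simp only [mem_range] at hi
          omega
  calc k.descFactorial m * ((p - k).descFactorial (k - m) * (p - k + 1) ^ m)
      ≤ k ^ m * ((∏ j ∈ range (k - m), (p - (m + j))) * ∏ i ∈ range m, (p - i)) :=
        Nat.mul_le_mul h1 (Nat.mul_le_mul h2 h3)
    _ = k ^ m * p.descFactorial k := by rw [split]; ring

/-- `m! C(k,ℓ) C(p-k,ℓ) (p-k+1)^m ≤ C(p,k) (k²)^m` where `m = k - ℓ`. -/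
private lemma choose_key (p k ℓ : ℕ) (hℓ : ℓ ≤ k) (hkp : 2 * k ≤ p) :
    (k - ℓ).factorial * k.choose ℓ * (p - k).choose ℓ * (p - k + 1) ^ (k - ℓ)
      ≤ p.choose k * (k ^ 2) ^ (k - ℓ) := by
  set m := k - ℓ with hm
  have hmk : m ≤ k := by omega
  have hℓ' : ℓ = k - m := by omega
  have e1 : k.descFactorial m = m.factorial * k.choose m := Nat.descFactorial_eq_factorial_mul_choose k m
  have e2 : (p - k).descFactorial (k - m) = (k - m).factorial * (p - k).choose (k - m) :=
    Nat.descFactorial_eq_factorial_mul_choose _ _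
  have e3 : p.descFactorial k = k.factorial * p.choose k := Nat.descFactorial_eq_factorial_mul_choose p k
  have e4 : k.choose m * m.factorial * (k - m).factorial = k.factorial := Nat.choose_mul_factorial_mul_factorial hmk
  have e5 : k.choose ℓ = k.choose m := by rw [hℓ', Nat.choose_symm hmk]
  have e6 : (p - k).choose ℓ = (p - k).choose (k - m) := by rw [hℓ']
  have G : (k.descFactorial m) * (k.descFactorial m *
        ((p - k).descFactorial (k - m) * (p - k + 1) ^ m))
      ≤ k ^ m * (k ^ m * p.descFactorial k) :=
    Nat.mul_le_mul (Nat.descFactorial_le_pow k m) (descF_key p k m hmk hkp)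
  rw [e1, e2, e3] at G
  have c_pos : 0 < k.choose m * (m.factorial * (k - m).factorial) :=
    Nat.mul_pos (Nat.choose_pos hmk)
      (Nat.mul_pos (Nat.factorial_pos m) (Nat.factorial_pos (k - m)))
  have main : (m.factorial * k.choose m * (p - k).choose (k - m) * (p - k + 1) ^ m)
        * (k.choose m * (m.factorial * (k - m).factorial))
      ≤ (p.choose k * (k ^ 2) ^ m) * (k.choose m * (m.factorial * (k - m).factorial)) := by
    calc (m.factorial * k.choose m * (p - k).choose (k - m) * (p - k + 1) ^ m)
          * (k.choose m * (m.factorial * (k - m).factorial))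
        = (m.factorial * k.choose m) * ((m.factorial * k.choose m) *
            (((k - m).factorial * (p - k).choose (k - m)) * (p - k + 1) ^ m)) := by ring
      _ ≤ k ^ m * (k ^ m * (k.factorial * p.choose k)) := G
      _ = (p.choose k * (k ^ 2) ^ m) * (k.choose m * (m.factorial * (k - m).factorial)) := by
          rw [← e4]; ring
  have := Nat.le_of_mul_le_mul_right main c_pos
  rw [e5, e6]
  exact this

open Finset in
/-- If `n ≤ (1-η)·log₂ C(p,k)` with `η ∈ (0,1)`, then the chi-squared divergence
`χ² = C(p,k)⁻¹ Σ_{ℓ=0}^k C(k,ℓ) C(p-k,ℓ) 2^{n(1-ℓ/k)} - 1` satisfies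
`χ² ≤ exp(e^{1-η} k (k/p)^η p/(p-k+1)) - 1`. -/
theorem chi_sq_upper_bound (p k n : ℕ) (hk : 1 ≤ k) (hkp : 2 * k ≤ p) (hn : 1 ≤ n)
    (η : ℝ) (hη0 : 0 < η) (hη1 : η < 1)
    (hn' : (n : ℝ) ≤ (1 - η) * Real.logb 2 (p.choose k)) :
    (p.choose k : ℝ)⁻¹ *
        ∑ ℓ ∈ range (k + 1),
          (k.choose ℓ : ℝ) * ((p - k).choose ℓ : ℝ) *
            (2 : ℝ) ^ ((n : ℝ) * (1 - (ℓ : ℝ) / k)) - 1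
      ≤ Real.exp (Real.exp (1 - η) * k * ((k : ℝ) / p) ^ η * ((p : ℝ) / ((p : ℝ) - k + 1)))
          - 1 := by
  have hkp' : k ≤ p := by omega
  have hk0 : (0:ℝ) < k := by exact_mod_cast hk
  have hp0 : (0:ℝ) < p := by
    have : 1 ≤ p := by omega
    exact_mod_cast this
  have hkpR : (k:ℝ) ≤ p := by exact_mod_cast hkp'
  have hpk1 : (0:ℝ) < (p:ℝ) - k + 1 := by linarith
  have hK : (0:ℝ) < (p.choose k : ℝ) := by exact_mod_cast Nat.choose_pos hkp'
  set t : ℝ := (2:ℝ) ^ ((n:ℝ) / k) with ht_def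
  have ht0 : (0:ℝ) < t := Real.rpow_pos_of_pos (by norm_num) _
  set c : ℝ := (k:ℝ)^2 * t / ((p:ℝ) - k + 1) with hc_def
  have hc0 : (0:ℝ) ≤ c := by positivity
  set C : ℝ := Real.exp (1 - η) * k * ((k : ℝ) / p) ^ η * ((p : ℝ) / ((p : ℝ) - k + 1))
    with hC_def
  have hcast : ((p - k + 1 : ℕ) : ℝ) = (p:ℝ) - k + 1 := by
    push_cast [hkp']; ring
  -- per-term bound
  have term_bound : ∀ ℓ ∈ range (k + 1),
      (k.choose ℓ : ℝ) * ((p - k).choose ℓ : ℝ) * (2 : ℝ) ^ ((n : ℝ) * (1 - (ℓ : ℝ) / k))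
        ≤ (p.choose k : ℝ) * (c ^ (k - ℓ) / (k - ℓ).factorial) := by
    intro ℓ hℓ
    simp only [mem_range] at hℓ
    have hℓk : ℓ ≤ k := by omega
    set m := k - ℓ with hm
    have hmcast : ((m:ℕ):ℝ) = (k:ℝ) - ℓ := by
      rw [hm]; push_cast [hℓk]; ring
    have hexp : (2 : ℝ) ^ ((n : ℝ) * (1 - (ℓ : ℝ) / k)) = t ^ m := by
      have h1 : (n : ℝ) * (1 - (ℓ : ℝ) / k) = (n:ℝ) / k * (m:ℕ) := by
        rw [hmcast]
        field_simp
      rw [h1, Real.rpow_mul (by norm_num), Real.rpow_natCast]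
    rw [hexp]
    have key := choose_key p k ℓ hℓk hkp
    have keyR : (m.factorial : ℝ) * (k.choose ℓ) * ((p - k).choose ℓ) * ((p:ℝ) - k + 1) ^ m
        ≤ (p.choose k : ℝ) * ((k:ℝ) ^ 2) ^ m := by
      rw [← hcast]
      exact_mod_cast key
    have hm0 : (0:ℝ) < (m.factorial : ℝ) := by exact_mod_cast Nat.factorial_pos m
    have hcm : c ^ m = ((k:ℝ)^2) ^ m * t ^ m / (((p:ℝ) - k + 1) ^ m) := by
      rw [hc_def, div_pow, mul_pow]
    have hX : (0:ℝ) < ((p:ℝ) - k + 1) ^ m * m.factorial := by positivity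
    rw [hcm, div_div, ← mul_div_assoc, le_div_iff₀ hX]
    calc (k.choose ℓ : ℝ) * ((p - k).choose ℓ) * t ^ m * (((p:ℝ) - k + 1) ^ m * m.factorial)
        = ((m.factorial : ℝ) * (k.choose ℓ) * ((p - k).choose ℓ) * ((p:ℝ) - k + 1) ^ m) * t ^ m := by
          ring
      _ ≤ ((p.choose k : ℝ) * ((k:ℝ) ^ 2) ^ m) * t ^ m :=
          mul_le_mul_of_nonneg_right keyR (by positivity)
      _ = (p.choose k : ℝ) * (((k:ℝ)^2) ^ m * t ^ m) := by ring
  -- sum bound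
  have sum_bound : ∑ ℓ ∈ range (k + 1),
      (k.choose ℓ : ℝ) * ((p - k).choose ℓ : ℝ) * (2 : ℝ) ^ ((n : ℝ) * (1 - (ℓ : ℝ) / k))
        ≤ (p.choose k : ℝ) * Real.exp c := by
    calc ∑ ℓ ∈ range (k + 1),
        (k.choose ℓ : ℝ) * ((p - k).choose ℓ : ℝ) * (2 : ℝ) ^ ((n : ℝ) * (1 - (ℓ : ℝ) / k))
        ≤ ∑ ℓ ∈ range (k + 1), (p.choose k : ℝ) * (c ^ (k - ℓ) / (k - ℓ).factorial) :=
          Finset.sum_le_sum term_bound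
      _ = (p.choose k : ℝ) * ∑ ℓ ∈ range (k + 1), c ^ (k - ℓ) / (k - ℓ).factorial := by
          rw [Finset.mul_sum]
      _ = (p.choose k : ℝ) * ∑ m ∈ range (k + 1), c ^ m / m.factorial := by
          congr 1
          have := Finset.sum_range_reflect (fun m => c ^ m / (m.factorial : ℝ)) (k + 1)
          simpa using this
      _ ≤ (p.choose k : ℝ) * Real.exp c :=
          mul_le_mul_of_nonneg_left (Real.sum_le_exp_of_nonneg hc0 (k+1)) hK.le
  -- c ≤ C
  have hcC : c ≤ C := by
    have hfk : (0:ℝ) < (k.factorial : ℝ) := by exact_mod_cast Nat.factorial_pos k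
    have hfact : (k:ℝ) ^ k / k.factorial ≤ Real.exp k := by
      calc (k:ℝ) ^ k / k.factorial ≤ ∑ i ∈ range (k + 1), (k:ℝ) ^ i / i.factorial := by
            have hnn : ∀ i ∈ range (k + 1), (0:ℝ) ≤ (k:ℝ) ^ i / i.factorial :=
              fun i _ => by positivity
            exact Finset.single_le_sum hnn (Finset.self_mem_range_succ k)
        _ ≤ Real.exp k := Real.sum_le_exp_of_nonneg hk0.le (k+1)
    have hkk : (k:ℝ) ^ k ≤ Real.exp k * k.factorial := by
      rw [div_le_iff₀ hfk] at hfact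
      linarith
    set E : ℝ := Real.exp 1 * ((p:ℝ) / k) with hE_def
    have hE1 : (1:ℝ) < E := by
      have h1 : (1:ℝ) ≤ (p:ℝ) / k := (one_le_div hk0).mpr hkpR
      have h2 : (1:ℝ) + 1 ≤ Real.exp 1 := Real.add_one_le_exp 1
      nlinarith
    have hE0 : (0:ℝ) < E := by linarith
    have hchoose : (p.choose k : ℝ) ≤ E ^ k := by
      have h1 : (k.factorial : ℝ) * (p.choose k) ≤ (p:ℝ) ^ k := by
        have h := Nat.descFactorial_le_pow p k
        rw [Nat.descFactorial_eq_factorial_mul_choose] at h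
        exact_mod_cast h
      have h2 : (p.choose k : ℝ) ≤ (p:ℝ) ^ k / k.factorial := by
        rw [le_div_iff₀ hfk]
        linarith [h1]
      have h3 : (p:ℝ) ^ k / k.factorial ≤ E ^ k := by
        have h30 : (1:ℝ) / k.factorial ≤ Real.exp k / (k:ℝ) ^ k := by
          rw [div_le_div_iff₀ hfk (by positivity)]
          linarith
        calc (p:ℝ) ^ k / k.factorial = (p:ℝ) ^ k * (1 / k.factorial) := by ring
          _ ≤ (p:ℝ) ^ k * (Real.exp k / (k:ℝ) ^ k) :=
              mul_le_mul_of_nonneg_left h30 (by positivity)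
          _ = E ^ k := by
              rw [hE_def, mul_pow, div_pow, Real.exp_one_pow]
              ring
      linarith
    have hlogb : Real.logb 2 (p.choose k) ≤ (k:ℝ) * Real.logb 2 E := by
      calc Real.logb 2 (p.choose k) ≤ Real.logb 2 (E ^ k) :=
            Real.logb_le_logb_of_le (by norm_num) hK hchoose
        _ = (k:ℝ) * Real.logb 2 E := Real.logb_pow 2 E k
    have hη' : (0:ℝ) ≤ 1 - η := by linarith
    have hnk : (n:ℝ) / k ≤ (1 - η) * Real.logb 2 E := by
      rw [div_le_iff₀ hk0]
      calc (n:ℝ) ≤ (1 - η) * Real.logb 2 (p.choose k) := hn'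
        _ ≤ (1 - η) * ((k:ℝ) * Real.logb 2 E) := mul_le_mul_of_nonneg_left hlogb hη'
        _ = (1 - η) * Real.logb 2 E * k := by ring
    have ht_le : t ≤ Real.exp (1 - η) * (((p:ℝ) / k) * ((k:ℝ) / p) ^ η) := by
      have h1 : t ≤ (2:ℝ) ^ ((1 - η) * Real.logb 2 E) :=
        Real.rpow_le_rpow_of_exponent_le (by norm_num) hnk
      have h2 : (2:ℝ) ^ ((1 - η) * Real.logb 2 E) = E ^ (1 - η) := by
        rw [mul_comm, Real.rpow_mul (by norm_num : (0:ℝ) ≤ 2),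
          Real.rpow_logb (by norm_num) (by norm_num) hE0]
      have h3 : E ^ (1 - η) = Real.exp (1 - η) * ((p:ℝ) / k) ^ (1 - η) := by
        rw [hE_def, Real.mul_rpow (Real.exp_pos 1).le (by positivity), Real.exp_one_rpow]
      have hpk0 : (0:ℝ) < (p:ℝ) / k := by positivity
      have h4 : ((p:ℝ) / k) ^ (1 - η) = ((p:ℝ) / k) * ((k:ℝ) / p) ^ η := by
        have h5 : ((k:ℝ) / p) ^ η = ((p:ℝ) / k) ^ (-η) := by
          rw [Real.rpow_neg hpk0.le, ← Real.inv_rpow hpk0.le, inv_div]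
        rw [h5, show (1 : ℝ) - η = 1 + -η from by ring, Real.rpow_add hpk0, Real.rpow_one]
      rw [h2, h3, h4] at h1
      exact h1
    have hstep : c ≤ (k:ℝ)^2 * (Real.exp (1 - η) * (((p:ℝ) / k) * ((k:ℝ) / p) ^ η))
        / ((p:ℝ) - k + 1) := by
      rw [hc_def]
      exact (div_le_div_iff_of_pos_right hpk1).mpr (mul_le_mul_of_nonneg_left ht_le (by positivity))
    calc c ≤ (k:ℝ)^2 * (Real.exp (1 - η) * (((p:ℝ) / k) * ((k:ℝ) / p) ^ η))
          / ((p:ℝ) - k + 1) := hstep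
      _ = C := by
        rw [hC_def]
        field_simp
  -- conclusion
  have hfinal : (p.choose k : ℝ)⁻¹ *
      ∑ ℓ ∈ range (k + 1),
        (k.choose ℓ : ℝ) * ((p - k).choose ℓ : ℝ) *
          (2 : ℝ) ^ ((n : ℝ) * (1 - (ℓ : ℝ) / k)) ≤ Real.exp C := by
    rw [inv_mul_le_iff₀ hK]
    calc _ ≤ (p.choose k : ℝ) * Real.exp c := sum_bound
      _ ≤ (p.choose k : ℝ) * Real.exp C :=
          mul_le_mul_of_nonneg_left (Real.exp_le_exp.mpr hcC) hK.le
  linarith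
end

section
/- Define χ²(p,k,n) = C(p,k)^{-1}·Σ_{ℓ=0}^{k} C(k,ℓ)·C(p-k,ℓ)·2^{n(1-ℓ/k)} - 1. For n ≥ (1-η)·log₂ C(p,k) with η ∈ (0,1), we have χ²(p,k,n) ≥ -1 + (C(p-k,k)/C(p,k))·(1 + (k^{1+η}/p^η)·(p/(p-2k+1))). -/
/-!
All terms of the sum are nonnegative, so it is at least its two top terms: `ℓ = k` gives
`C(p-k,k)` and `ℓ = k-1` gives `k·C(p-k,k-1)·2^{n/k}`. By `k·C(p-k,k) = (p-2k+1)·C(p-k,k-1)`,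
comparing the second term with the correction term of the bound reduces to
`(p/k)^{1-η} ≤ 2^{n/k}`, which follows from the hypothesis on `n` and `(p/k)^k ≤ C(p,k)`.
-/

open Finset Real

namespace Nat

theorem pow_mul_factorial_le_pow_mul_descFactorial {n k : ℕ} (hkn : k ≤ n) :
    n ^ k * k ! ≤ k ^ k * n.descFactorial k := by
  rw [← descFactorial_self, descFactorial_eq_prod_range, descFactorial_eq_prod_range,
    pow_eq_prod_const, pow_eq_prod_const, ← prod_mul_distrib, ← prod_mul_distrib]
  refine prod_le_prod' fun i _ => ?_
  rw [Nat.mul_sub, Nat.mul_sub, Nat.mul_comm n k]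
  exact Nat.sub_le_sub_left (Nat.mul_le_mul_right i hkn) _

theorem div_pow_le_choose {α : Type*} [Field α] [LinearOrder α] [IsStrictOrderedRing α]
    {n k : ℕ} (hkn : k ≤ n) : ((n : α) / k) ^ k ≤ n.choose k := by
  rcases k.eq_zero_or_pos with rfl | hk
  · simp
  rw [div_pow, div_le_iff₀ (by positivity),
    ← mul_le_mul_iff_right₀ (by positivity : (0 : α) < k !)]
  calc (k ! : α) * n ^ k = n ^ k * k ! := mul_comm _ _
    _ ≤ k ^ k * n.descFactorial k := mod_cast pow_mul_factorial_le_pow_mul_descFactorial hkn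
    _ = k ! * (n.choose k * k ^ k) := by
      rw [descFactorial_eq_factorial_mul_choose]; push_cast; ring

theorem cast_choose_mul_eq {R : Type*} [CommRing R] {m k : ℕ} (hk : 0 < k) :
    (m.choose k : R) * k = m.choose (k - 1) * (m - k + 1) := by
  obtain ⟨j, rfl⟩ : ∃ j, k = j + 1 := ⟨k - 1, by omega⟩
  rw [Nat.add_sub_cancel, Nat.cast_succ]
  rcases le_or_gt j m with hjm | hmj
  · have := congrArg (Nat.cast : ℕ → R) (choose_succ_right_eq m j)
    push_cast [Nat.cast_sub hjm] at this
    rw [this]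
    ring
  · simp [choose_eq_zero_of_lt hmj, choose_eq_zero_of_lt (hmj.trans (Nat.lt_succ_self j))]

end Nat

theorem div_rpow_le_two_rpow_div_of_mul_logb_choose_le {p k : ℕ} {a n : ℝ} (hk : 0 < k)
    (hkp : k ≤ p) (ha : 0 ≤ a) (hn : a * logb 2 (p.choose k) ≤ n) :
    ((p : ℝ) / k) ^ a ≤ 2 ^ (n / k) := by
  have hk' : (0 : ℝ) < k := by exact_mod_cast hk
  have hpk : (0 : ℝ) < p / k := div_pos (by exact_mod_cast hk.trans_le hkp) hk'
  have hlog : k * logb 2 (p / k) ≤ logb 2 (p.choose k) := by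
    rw [← logb_pow]
    exact logb_le_logb_of_le one_lt_two (by positivity) (Nat.div_pow_le_choose hkp)
  calc ((p : ℝ) / k) ^ a = 2 ^ (logb 2 (p / k) * a) := by
        rw [rpow_mul zero_le_two, rpow_logb two_pos one_lt_two.ne' hpk]
    _ ≤ 2 ^ (n / k) := by
      refine rpow_le_rpow_of_exponent_le one_le_two ?_
      rw [le_div_iff₀ hk']
      nlinarith

theorem rpow_one_add_div_rpow_mul {x y : ℝ} (hx : 0 < x) (hy : 0 < y) (η : ℝ) :
    x ^ (1 + η) / y ^ η * y = x ^ 2 * (y / x) ^ (1 - η) := by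
  rw [div_rpow hy.le hx.le, rpow_add hx, rpow_sub hx, rpow_sub hy, rpow_one, rpow_one]
  have := rpow_pos_of_pos hx η
  have := rpow_pos_of_pos hy η
  field_simp

noncomputable def chiSqTerm (p k n ℓ : ℕ) : ℝ :=
  k.choose ℓ * (p - k).choose ℓ * (2 : ℝ) ^ ((n : ℝ) * (1 - (ℓ : ℝ) / k))

theorem chiSqTerm_nonneg (p k n ℓ : ℕ) : 0 ≤ chiSqTerm p k n ℓ := by
  unfold chiSqTerm; positivity

theorem chiSqTerm_self {k : ℕ} (hk : k ≠ 0) (p n : ℕ) :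
    chiSqTerm p k n k = (p - k).choose k := by
  simp [chiSqTerm, hk]

theorem chiSqTerm_sub_one {k : ℕ} (hk : k ≠ 0) (p n : ℕ) :
    chiSqTerm p k n (k - 1) = k * (p - k).choose (k - 1) * 2 ^ ((n : ℝ) / k) := by
  have hk' : (k : ℝ) ≠ 0 := by exact_mod_cast hk
  rw [chiSqTerm, Nat.choose_symm_of_eq_add (by omega : k = (k - 1) + 1), Nat.choose_one_right,
    Nat.cast_pred (Nat.pos_of_ne_zero hk)]
  congr 2
  field_simp
  ring

theorem chiSqTerm_self_add_sub_one_le_sum {k : ℕ} (hk : k ≠ 0) (p n : ℕ) :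
    chiSqTerm p k n k + chiSqTerm p k n (k - 1) ≤
      ∑ ℓ ∈ range (k + 1), chiSqTerm p k n ℓ :=
  add_le_sum (fun ℓ _ => chiSqTerm_nonneg p k n ℓ) (by simp) (by simp) (by omega)

theorem choose_mul_le_chiSqTerm_sub_one {p k n : ℕ} (hk : 1 ≤ k) (hkp : 2 * k ≤ p) {η : ℝ}
    (hη1 : η < 1) (hn : (1 - η) * logb 2 (p.choose k) ≤ n) :
    ((p - k).choose k : ℝ) * ((k : ℝ) ^ (1 + η) / p ^ η * (p / (p - 2 * k + 1)))
      ≤ chiSqTerm p k n (k - 1) := by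
  have hk' : (0 : ℝ) < k := by exact_mod_cast hk
  have hp : (0 : ℝ) < p := by exact_mod_cast (by omega : 0 < p)
  have hgap : (0 : ℝ) < p - 2 * k + 1 := by
    have : (2 * k : ℝ) ≤ p := by exact_mod_cast hkp
    linarith
  have hchoose : ((p - k).choose k : ℝ) * k = (p - k).choose (k - 1) * (p - 2 * k + 1) := by
    rw [Nat.cast_choose_mul_eq hk, Nat.cast_sub (by omega)]
    ring
  calc _ = ((p - k).choose k * k : ℝ) * (k * (p / k) ^ (1 - η)) / (p - 2 * k + 1) := by
        rw [mul_div_assoc', ← mul_div_assoc, rpow_one_add_div_rpow_mul hk' hp]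
        ring
    _ = (k : ℝ) * (p - k).choose (k - 1) * (p / k) ^ (1 - η) := by
        rw [hchoose]
        field_simp
    _ ≤ (k : ℝ) * (p - k).choose (k - 1) * 2 ^ ((n : ℝ) / k) := by
        gcongr
        exact div_rpow_le_two_rpow_div_of_mul_logb_choose_le hk (by omega) (by linarith) hn
    _ = chiSqTerm p k n (k - 1) := (chiSqTerm_sub_one (by omega) p n).symm

open Finset in
theorem chi_sq_lower_bound_general (p k n : ℕ) (hk : 1 ≤ k) (hkp : 2 * k ≤ p)
    (η : ℝ) (hη1 : η < 1)
    (hn' : (n : ℝ) ≥ (1 - η) * Real.logb 2 (p.choose k)) :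
    (p.choose k : ℝ)⁻¹ *
        ∑ ℓ ∈ range (k + 1),
          (k.choose ℓ : ℝ) * ((p - k).choose ℓ : ℝ) *
            (2 : ℝ) ^ ((n : ℝ) * (1 - (ℓ : ℝ) / k)) - 1
      ≥ -1 + (((p - k).choose k : ℝ) / (p.choose k : ℝ)) *
          (1 + ((k : ℝ) ^ ((1 : ℝ) + η) / (p : ℝ) ^ η) *
            ((p : ℝ) / ((p : ℝ) - 2 * k + 1))) := by
  have hC : (0 : ℝ) < p.choose k := by exact_mod_cast Nat.choose_pos (by omega)
  have hsum : ((p - k).choose k : ℝ) * (1 + (k : ℝ) ^ (1 + η) / p ^ η * (p / (p - 2 * k + 1)))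
        ≤ ∑ ℓ ∈ range (k + 1), chiSqTerm p k n ℓ :=
    calc _ = chiSqTerm p k n k + ((p - k).choose k : ℝ) *
          ((k : ℝ) ^ (1 + η) / p ^ η * (p / (p - 2 * k + 1))) := by
          rw [chiSqTerm_self (by omega)]; ring
      _ ≤ chiSqTerm p k n k + chiSqTerm p k n (k - 1) := by
          grw [choose_mul_le_chiSqTerm_sub_one hk hkp hη1 hn']
      _ ≤ _ := chiSqTerm_self_add_sub_one_le_sum (by omega) p n
  have := div_le_div_of_nonneg_right hsum hC.le
  rw [inv_mul_eq_div, div_mul_eq_mul_div]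
  unfold chiSqTerm at this
  linarith

open Finset in
/-- Lower bound on the chi-squared divergence (Theorem 4, eqs. (53)–(57)): for
`n ≥ (1-η)·log₂ C(p,k)` with `η ∈ (0,1)` and `2k ≤ p`,
`χ²(p,k,n) ≥ -1 + (C(p-k,k)/C(p,k))·(1 + (k^{1+η}/p^η)·(p/(p-2k+1)))`. -/
theorem chi_sq_lower_bound (p k n : ℕ) (hk : 1 ≤ k) (hkp : 2 * k ≤ p) (hn : 1 ≤ n)
    (η : ℝ) (hη0 : 0 < η) (hη1 : η < 1)
    (hn' : (n : ℝ) ≥ (1 - η) * Real.logb 2 (p.choose k)) :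
    (p.choose k : ℝ)⁻¹ *
        ∑ ℓ ∈ range (k + 1),
          (k.choose ℓ : ℝ) * ((p - k).choose ℓ : ℝ) *
            (2 : ℝ) ^ ((n : ℝ) * (1 - (ℓ : ℝ) / k)) - 1
      ≥ -1 + (((p - k).choose k : ℝ) / (p.choose k : ℝ)) *
          (1 + ((k : ℝ) ^ ((1 : ℝ) + η) / (p : ℝ) ^ η) *
            ((p : ℝ) / ((p : ℝ) - 2 * k + 1))) :=
  chi_sq_lower_bound_general p k n hk hkp η hη1 hn'
end
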